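/- Let $C$ be a conformal algebra over $k[D]$ (char $k=0$) in which every element is nilpotent with respect to the $0$-product (for each $b \in C$ there is $m$ with $b \oo{0} b \oo{0} \cdots \oo{0} b = 0$, $m$ factors, left-normed), and suppose $C$ is associative. Let $V$ be a left conformal $C$-module, $\gamma \in k$, and define $\{a\,_{\gamma}\,u\} = \sum_{n \geq 0} \gamma^{(n)} \{a \oo{n} u\}$ where $\gamma^{(n)} = \gamma^n/n!$ and $\{a \oo{n} u\} = \sum_{s\geq 0}(-1)^{n+s} D^{(s)}(a \oo{n+s} u)$. If $u \in V$ satisfies $\{b\,_{\gamma}\, u\} = u$ for some $b \in C$, then $u = 0$. -/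
import Mathlib


open Finset

/-- Left-normed `0`-power: `lnpow mul0 b m` is `b ⟨0⟩ b ⟨0⟩ ⋯ ⟨0⟩ b` with `m + 1`
factors, bracketed to the left. -/
def lnpow {C : Type*} (mul0 : C → C → C) (b : C) : ℕ → C
  | 0 => b
  | m + 1 => mul0 (lnpow mul0 b m) b

/-- The curly action `{a ⟨n⟩ u} = ∑ₛ (-1)^{n+s} (Dˢ/s!)(a ⟨n+s⟩ u)`. -/
noncomputable def curlyAct {k : Type*} [Field k]
    {C V : Type*} [AddCommGroup C] [Module k C] [AddCommGroup V] [Module k V]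
    (Dv : V →ₗ[k] V) (act : ℕ → C →ₗ[k] V →ₗ[k] V)
    (n : ℕ) (a : C) (u : V) : V :=
  ∑ᶠ s : ℕ, ((-1 : k) ^ (n + s) * ((s.factorial : k))⁻¹) • ((Dv ^ s) (act (n + s) a u))


section ConformalAux

variable {k : Type*} [Field k] [CharZero k]
variable {C V : Type*} [AddCommGroup C] [Module k C] [AddCommGroup V] [Module k V]
variable (Dv : V →ₗ[k] V) (act : ℕ → C →ₗ[k] V →ₗ[k] V)

set_option linter.unusedSectionVars false

/-- The γ-bracket action `{a ᵧ u}`. -/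
noncomputable def gact (γ : k) (a : C) (u : V) : V :=
  ∑ᶠ n : ℕ, (γ ^ n * ((n.factorial : k))⁻¹) • curlyAct Dv act n a u

lemma gact_eq (γ : k) (a : C) (u : V) (N : ℕ) (hN : ∀ n ≥ N, act n a u = 0) :
    gact Dv act γ a u
      = ∑ m ∈ range N, (((-1:k)^m * ((m.factorial : k))⁻¹) •
          (((Dv + γ • (1 : V →ₗ[k] V)) ^ m) (act m a u))) := by
  have hcurly : ∀ n, curlyAct Dv act n a u
      = ∑ s ∈ range N, ((-1 : k) ^ (n + s) * ((s.factorial : k))⁻¹) •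
          ((Dv ^ s) (act (n + s) a u)) := by
    intro n
    apply finsum_eq_sum_of_support_subset
    intro s hs
    rw [Finset.coe_range, Set.mem_Iio]
    by_contra hsn
    push_neg at hsn
    exact hs (by simp [hN (n + s) (by omega)])
  have hzero : ∀ n ≥ N, curlyAct Dv act n a u = 0 := by
    intro n hn
    rw [hcurly n]
    refine Finset.sum_eq_zero fun s _ => ?_
    rw [hN (n + s) (by omega)]
    simp
  have houter : gact Dv act γ a u
      = ∑ n ∈ range N, (γ ^ n * ((n.factorial : k))⁻¹) • curlyAct Dv act n a u := by
    apply finsum_eq_sum_of_support_subset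
    intro n hn
    rw [Finset.coe_range, Set.mem_Iio]
    by_contra hnn
    push_neg at hnn
    exact hn (by simp [hzero n hnn])
  rw [houter]
  -- expand E-power on RHS
  have hEpow : ∀ m ∈ range N, (((-1:k)^m * ((m.factorial : k))⁻¹) •
        (((Dv + γ • (1 : V →ₗ[k] V)) ^ m) (act m a u)))
      = ∑ s ∈ range N, (((-1:k)^m * ((m.factorial : k))⁻¹ * ((m.choose s : k) * γ^(m-s))) •
          ((Dv ^ s) (act m a u))) := by
    intro m hm
    have hc : Commute Dv (γ • (1 : V →ₗ[k] V)) := (Commute.one_right Dv).smul_right γ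
    calc ((-1:k)^m * ((m.factorial : k))⁻¹) • (((Dv + γ • (1 : V →ₗ[k] V)) ^ m) (act m a u))
        = ∑ s ∈ range (m+1), (((-1:k)^m * ((m.factorial : k))⁻¹ * ((m.choose s : k) * γ^(m-s))) •
          ((Dv ^ s) (act m a u))) := by
          rw [hc.add_pow]
          simp only [LinearMap.sum_apply, Module.End.mul_apply, smul_pow, one_pow,
            LinearMap.smul_apply, Module.End.one_apply]
          rw [Finset.smul_sum]
          refine Finset.sum_congr rfl fun s _ => ?_
          rw [Module.End.natCast_apply, map_smul, map_nsmul, ← Nat.cast_smul_eq_nsmul k,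
            smul_smul, smul_smul]
          ring_nf
      _ = ∑ s ∈ range N, (((-1:k)^m * ((m.factorial : k))⁻¹ * ((m.choose s : k) * γ^(m-s))) •
          ((Dv ^ s) (act m a u))) := by
          refine Finset.sum_subset (Finset.range_subset_range.mpr (Finset.mem_range.mp hm)) ?_
          intro s _ hs
          rw [Nat.choose_eq_zero_of_lt (by simpa using hs)]
          simp
  rw [Finset.sum_congr rfl hEpow]
  -- both sides are double sums over range N ×ˢ range N
  simp only [hcurly, Finset.smul_sum, smul_smul]
  rw [← Finset.sum_product', ← Finset.sum_product']
  rw [← Finset.sum_filter_add_sum_filter_not (range N ×ˢ range N) (fun p => p.1 + p.2 < N)]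
  conv_rhs => rw [← Finset.sum_filter_add_sum_filter_not (range N ×ˢ range N)
    (fun p => p.2 ≤ p.1)]
  have h1 : ∑ p ∈ (range N ×ˢ range N).filter (fun p => ¬ p.1 + p.2 < N),
      (γ ^ p.1 * (↑p.1.factorial)⁻¹ * ((-1:k) ^ (p.1 + p.2) * (↑p.2.factorial)⁻¹)) •
        (Dv ^ p.2) ((act (p.1 + p.2)) a u) = 0 := by
    refine Finset.sum_eq_zero fun p hp => ?_
    simp only [Finset.mem_filter, not_lt] at hp
    rw [hN _ hp.2]
    simp
  have h2 : ∑ p ∈ (range N ×ˢ range N).filter (fun p => ¬ p.2 ≤ p.1),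
      ((-1:k) ^ p.1 * (↑p.1.factorial)⁻¹ * (↑(p.1.choose p.2) * γ ^ (p.1 - p.2))) •
        (Dv ^ p.2) ((act p.1) a u) = 0 := by
    refine Finset.sum_eq_zero fun p hp => ?_
    simp only [Finset.mem_filter, not_le] at hp
    rw [Nat.choose_eq_zero_of_lt hp.2]
    simp
  rw [h1, h2, add_zero, add_zero]
  refine Finset.sum_nbij' (fun p => (p.1 + p.2, p.2)) (fun p => (p.1 - p.2, p.2)) ?_ ?_ ?_ ?_ ?_
  · rintro ⟨n, s⟩ hp
    simp only [Finset.mem_filter, Finset.mem_product, Finset.mem_range] at hp ⊢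
    exact ⟨⟨hp.2, hp.1.2⟩, Nat.le_add_left _ _⟩
  · rintro ⟨m, s⟩ hp
    simp only [Finset.mem_filter, Finset.mem_product, Finset.mem_range] at hp ⊢
    exact ⟨⟨Nat.lt_of_le_of_lt (Nat.sub_le m s) hp.1.1, hp.1.2⟩, by omega⟩
  · rintro ⟨n, s⟩ hp; simp
  · rintro ⟨m, s⟩ hp
    simp only [Finset.mem_filter, Finset.mem_product, Finset.mem_range] at hp
    simp [Nat.sub_add_cancel hp.2]
  · rintro ⟨n, s⟩ hp
    simp only [Finset.mem_filter, Finset.mem_product, Finset.mem_range] at hp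
    simp only [Nat.add_sub_cancel]
    congr 1
    have key : (((n+s).choose s : k)) * (s.factorial : k) * (n.factorial : k)
        = ((n+s).factorial : k) := by
      have := Nat.choose_mul_factorial_mul_factorial (Nat.le_add_left s n)
      rw [Nat.add_sub_cancel] at this
      exact_mod_cast congrArg (Nat.cast : ℕ → k) this
    have hf1 : ((n.factorial : k)) ≠ 0 := Nat.cast_ne_zero.mpr (Nat.factorial_ne_zero n)
    have hf2 : ((s.factorial : k)) ≠ 0 := Nat.cast_ne_zero.mpr (Nat.factorial_ne_zero s)
    have hf3 : (((n+s).factorial : k)) ≠ 0 := Nat.cast_ne_zero.mpr (Nat.factorial_ne_zero _)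
    have hch : (((n+s).choose s : ℕ) : k)
        = ((n+s).factorial : k) * ((s.factorial : k))⁻¹ * ((n.factorial : k))⁻¹ := by
      field_simp
      linear_combination key
    rw [hch]
    field_simp


lemma act_E (hC2V : ∀ (n : ℕ) (a : C) (u : V),
      act n a (Dv u) = Dv (act n a u) + (n : k) • act (n - 1) a u)
    (γ : k) (a : C) (n : ℕ) (v : V) :
    act n a ((Dv + γ • (1 : V →ₗ[k] V)) v)
      = (Dv + γ • (1 : V →ₗ[k] V)) (act n a v) + (n : k) • act (n-1) a v := by
  simp only [LinearMap.add_apply, LinearMap.smul_apply, Module.End.one_apply, map_add, map_smul,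
    hC2V n a v]
  abel

lemma act_Epow (hC2V : ∀ (n : ℕ) (a : C) (u : V),
      act n a (Dv u) = Dv (act n a u) + (n : k) • act (n - 1) a u)
    (γ : k) (a : C) :
    ∀ (l m : ℕ) (v : V),
    act m a (((Dv + γ • (1 : V →ₗ[k] V)) ^ l) v)
      = ∑ j ∈ range (l+1), (((l.choose j * m.descFactorial j : ℕ)) : k) •
          (((Dv + γ • (1 : V →ₗ[k] V)) ^ (l-j)) (act (m-j) a v)) := by
  intro l
  set E := Dv + γ • (1 : V →ₗ[k] V) with hE
  induction l with
  | zero => intro m v; simp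
  | succ l IH =>
    intro m v
    have hstep : ((E ^ (l+1)) v) = (E ^ l) (E v) := by
      rw [pow_succ, Module.End.mul_apply]
    rw [hstep, IH m (E v)]
    have hsplit : ∀ j ∈ range (l+1),
        (((l.choose j * m.descFactorial j : ℕ)) : k) • ((E ^ (l-j)) (act (m-j) a (E v)))
        = (((l.choose j * m.descFactorial j : ℕ)) : k) • ((E ^ ((l+1)-j)) (act (m-j) a v))
          + (((l.choose j * m.descFactorial (j+1) : ℕ)) : k) • ((E ^ (l-j)) (act (m-(j+1)) a v)) := by
      intro j hj
      have hjl : j ≤ l := Nat.lt_succ_iff.mp (Finset.mem_range.mp hj)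
      rw [act_E Dv act hC2V γ a (m-j) v]
      rw [map_add, map_smul, smul_add]
      congr 1
      · -- E-power bump
        have h' : (l+1) - j = (l - j) + 1 := by omega
        rw [h', pow_succ, Module.End.mul_apply]
      · rw [smul_smul, Nat.descFactorial_succ, show m - j - 1 = m - (j+1) by omega]
        push_cast
        ring_nf
    rw [Finset.sum_congr rfl hsplit, Finset.sum_add_distrib]
    -- now RHS target
    rw [Finset.sum_range_succ' (fun j => (((((l+1).choose j * m.descFactorial j : ℕ))) : k) •
          ((E ^ ((l+1)-j)) (act (m-j) a v))) (l+1)]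
    have hfirst : ∑ j ∈ range (l+1),
        (((l.choose j * m.descFactorial j : ℕ)) : k) • ((E ^ ((l+1)-j)) (act (m-j) a v))
        = (∑ i ∈ range (l+1), ((((l.choose (i+1) * m.descFactorial (i+1) : ℕ))) : k) •
            ((E ^ ((l+1)-(i+1))) (act (m-(i+1)) a v)))
          + ((((l.choose 0 * m.descFactorial 0 : ℕ))) : k) • ((E ^ (l+1)) (act m a v)) := by
      have htop : ∑ j ∈ range (l+2), (((l.choose j * m.descFactorial j : ℕ)) : k) •
          ((E ^ ((l+1)-j)) (act (m-j) a v))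
          = ∑ j ∈ range (l+1), (((l.choose j * m.descFactorial j : ℕ)) : k) •
          ((E ^ ((l+1)-j)) (act (m-j) a v)) := by
        rw [Finset.sum_range_succ]
        simp [Nat.choose_succ_self]
      rw [← htop, Finset.sum_range_succ' (fun j => (((l.choose j * m.descFactorial j : ℕ)) : k) •
          ((E ^ ((l+1)-j)) (act (m-j) a v))) (l+1)]
      simp
    rw [hfirst]
    have hcomb : ∀ i ∈ range (l+1),
        (((((l+1).choose (i+1) * m.descFactorial (i+1) : ℕ))) : k) •
            ((E ^ ((l+1)-(i+1))) (act (m-(i+1)) a v))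
        = ((((l.choose (i+1) * m.descFactorial (i+1) : ℕ))) : k) •
            ((E ^ ((l+1)-(i+1))) (act (m-(i+1)) a v))
          + ((((l.choose i * m.descFactorial (i+1) : ℕ))) : k) •
            ((E ^ (l-i)) (act (m-(i+1)) a v)) := by
      intro i hi
      rw [Nat.choose_succ_succ l i]
      have h2 : (l+1) - (i+1) = l - i := by omega
      rw [h2, add_mul, Nat.cast_add, add_smul]
      exact add_comm _ _
    rw [Finset.sum_congr rfl hcomb, Finset.sum_add_distrib]
    simp only [Nat.choose_zero_right, Nat.descFactorial_zero, mul_one, one_mul, Nat.cast_one,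
      one_smul, Nat.sub_zero]
    abel

lemma gact_key (hlocV : ∀ (a : C) (u : V), ∃ N : ℕ, ∀ n ≥ N, act n a u = 0)
    (hC2V : ∀ (n : ℕ) (a : C) (u : V),
      act n a (Dv u) = Dv (act n a u) + (n : k) • act (n - 1) a u)
    (γ : k) (a b : C) (u : V) :
    gact Dv act γ a (gact Dv act γ b u) = gact Dv act γ a (act 0 b u) := by
  obtain ⟨N2, hN2⟩ := hlocV b u
  rcases Nat.eq_zero_or_pos N2 with h0 | hN2pos
  · have hb : gact Dv act γ b u = 0 := by
      rw [gact_eq Dv act γ b u 0 (fun n _ => hN2 n (by omega))]; simp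
    rw [hb, hN2 0 (by omega)]
  · set E := Dv + γ • (1 : V →ₗ[k] V) with hE
    choose g hg using fun l => hlocV a ((E ^ l) (act l b u))
    choose g' hg' using fun l => hlocV a (act l b u)
    set N1 := max ((range N2).sup g) ((range N2).sup g') with hN1
    set M := N1 + N2 with hM
    have hgM : ∀ l < N2, ∀ n ≥ N1, act n a ((E ^ l) (act l b u)) = 0 := fun l hl n hn =>
      hg l n (le_trans (le_trans (Finset.le_sup (mem_range.mpr hl)) (le_max_left _ _)) hn)
    have hg'M : ∀ l < N2, ∀ n ≥ N1, act n a (act l b u) = 0 := fun l hl n hn =>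
      hg' l n (le_trans (le_trans (Finset.le_sup (mem_range.mpr hl)) (le_max_right _ _)) hn)
    have hFb : gact Dv act γ b u
        = ∑ l ∈ range N2, (((-1:k)^l * ((l.factorial : k))⁻¹) • ((E ^ l) (act l b u))) :=
      gact_eq Dv act γ b u N2 hN2
    have hbound1 : ∀ n ≥ M, act n a (gact Dv act γ b u) = 0 := by
      intro n hn
      rw [hFb, map_sum]
      refine Finset.sum_eq_zero fun l hl => ?_
      rw [map_smul, hgM l (mem_range.mp hl) n (by omega), smul_zero]
    have hbound2 : ∀ n ≥ M, act n a (act 0 b u) = 0 := fun n hn =>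
      hg'M 0 hN2pos n (by omega)
    rw [gact_eq Dv act γ a _ M hbound1, gact_eq Dv act γ a (act 0 b u) M hbound2]
    -- expand the inner gact and apply the commutation formula
    have hLHS : ∀ m ∈ range M,
        (((-1:k)^m * ((m.factorial : k))⁻¹) • ((E ^ m) (act m a (gact Dv act γ b u))))
        = ∑ l ∈ range N2, ∑ j ∈ range N2,
            ((((-1:k)^m * ((m.factorial : k))⁻¹) * ((-1:k)^l * ((l.factorial : k))⁻¹)
              * (((l.choose j * m.descFactorial j : ℕ)) : k)) •
              ((E ^ m) ((E ^ (l-j)) (act (m-j) a (act l b u))))) := by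
      intro m _
      rw [hFb, map_sum]
      simp only [map_smul]
      rw [map_sum, Finset.smul_sum]
      refine Finset.sum_congr rfl fun l hl => ?_
      rw [act_Epow Dv act hC2V γ a l m (act l b u)]
      have hsub : ∑ j ∈ range (l+1), (((l.choose j * m.descFactorial j : ℕ)) : k) •
            ((E ^ (l-j)) (act (m-j) a (act l b u)))
          = ∑ j ∈ range N2, (((l.choose j * m.descFactorial j : ℕ)) : k) •
            ((E ^ (l-j)) (act (m-j) a (act l b u))) := by
        refine Finset.sum_subset (Finset.range_subset_range.mpr (mem_range.mp hl)) ?_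
        intro j _ hj
        rw [Nat.choose_eq_zero_of_lt (by simpa using hj)]
        simp
      rw [hsub, map_smul, map_sum, Finset.smul_sum, Finset.smul_sum]
      refine Finset.sum_congr rfl fun j _ => ?_
      rw [map_smul, smul_smul, smul_smul]
    rw [Finset.sum_congr rfl hLHS]
    -- reorder: ∑_m ∑_l ∑_j → ∑_l ∑_j ∑_m
    rw [Finset.sum_comm]
    have hswap : ∀ l ∈ range N2,
        (∑ m ∈ range M, ∑ j ∈ range N2,
            ((((-1:k)^m * ((m.factorial : k))⁻¹) * ((-1:k)^l * ((l.factorial : k))⁻¹)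
              * (((l.choose j * m.descFactorial j : ℕ)) : k)) •
              ((E ^ m) ((E ^ (l-j)) (act (m-j) a (act l b u))))))
        = ∑ j ∈ range N2, ∑ m ∈ range M,
            ((((-1:k)^m * ((m.factorial : k))⁻¹) * ((-1:k)^l * ((l.factorial : k))⁻¹)
              * (((l.choose j * m.descFactorial j : ℕ)) : k)) •
              ((E ^ m) ((E ^ (l-j)) (act (m-j) a (act l b u))))) := fun l _ => Finset.sum_comm
    rw [Finset.sum_congr rfl hswap]
    -- inner reindexing over m
    have hinner : ∀ l ∈ range N2, ∀ j ∈ range N2,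
        (∑ m ∈ range M,
            ((((-1:k)^m * ((m.factorial : k))⁻¹) * ((-1:k)^l * ((l.factorial : k))⁻¹)
              * (((l.choose j * m.descFactorial j : ℕ)) : k)) •
              ((E ^ m) ((E ^ (l-j)) (act (m-j) a (act l b u))))))
        = ∑ i ∈ range M,
            (((-1:k)^j * ((l.choose j : ℕ) : k)) •
             ((((-1:k)^i * ((i.factorial : k))⁻¹) * ((-1:k)^l * ((l.factorial : k))⁻¹)) •
              ((E ^ (i+l)) (act i a (act l b u))))) := by
      intro l hl j hj
      rcases Nat.lt_or_ge l j with hlj | hjl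
      · rw [Finset.sum_eq_zero, Finset.sum_eq_zero]
        · intro i _
          rw [Nat.choose_eq_zero_of_lt hlj]
          simp
        · intro m _
          rw [Nat.choose_eq_zero_of_lt hlj]
          simp
      · -- j ≤ l
        have hjM : j ≤ M := by
          have := mem_range.mp hj; omega
        conv_lhs => rw [Finset.range_eq_Ico]
        rw [← Finset.sum_Ico_consecutive _ (Nat.zero_le j) hjM]
        have hzero1 : ∑ m ∈ Finset.Ico 0 j,
            ((((-1:k)^m * ((m.factorial : k))⁻¹) * ((-1:k)^l * ((l.factorial : k))⁻¹)
              * (((l.choose j * m.descFactorial j : ℕ)) : k)) •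
              ((E ^ m) ((E ^ (l-j)) (act (m-j) a (act l b u))))) = 0 := by
          refine Finset.sum_eq_zero fun m hm => ?_
          rw [Nat.descFactorial_eq_zero_iff_lt.mpr (by simp at hm; omega)]
          simp
        rw [hzero1, zero_add, Finset.sum_Ico_eq_sum_range]
        have hMj : M - j ≤ M := Nat.sub_le M j
        rw [Finset.sum_subset (Finset.range_subset_range.mpr hMj) ?zeros]
        case zeros =>
          intro i _ hi
          have hiN1 : i ≥ N1 := by
            simp only [mem_range, not_lt] at hi
            have := mem_range.mp hj
            omega
          rw [show j + i - j = i by omega, hg'M l (mem_range.mp hl) i hiN1]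
          simp
        refine Finset.sum_congr rfl fun i _ => ?_
        rw [show j + i - j = i by omega]
        have hvec : (E ^ (j+i)) ((E ^ (l-j)) (act i a (act l b u)))
            = (E ^ (i+l)) (act i a (act l b u)) := by
          rw [← Module.End.mul_apply, ← pow_add, show j + i + (l-j) = i + l by omega]
        rw [hvec, smul_smul]
        congr 1
        have hfact : ((i.factorial : k)) * (((j+i).descFactorial j : ℕ) : k)
            = (((j+i).factorial : k)) := by
          have := Nat.factorial_mul_descFactorial (Nat.le_add_right j i)
          rw [Nat.add_sub_cancel_left] at this
          exact_mod_cast congrArg (Nat.cast : ℕ → k) this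
        have hf1 : ((i.factorial : k)) ≠ 0 := Nat.cast_ne_zero.mpr (Nat.factorial_ne_zero i)
        have hf2 : (((j+i).factorial : k)) ≠ 0 := Nat.cast_ne_zero.mpr (Nat.factorial_ne_zero _)
        have hf3 : ((l.factorial : k)) ≠ 0 := Nat.cast_ne_zero.mpr (Nat.factorial_ne_zero l)
        have hdesc : (((j+i).descFactorial j : ℕ) : k)
            = (((j+i).factorial : k)) * ((i.factorial : k))⁻¹ := by
          field_simp
          linear_combination hfact
        rw [pow_add, Nat.cast_mul, hdesc]
        field_simp
    rw [Finset.sum_congr rfl (fun l hl => Finset.sum_congr rfl (fun j hj => hinner l hl j hj))]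
    -- now sum over j of (-1)^j * choose l j collapses
    have hj_collapse : ∀ l ∈ range N2,
        (∑ j ∈ range N2, ∑ i ∈ range M,
            (((-1:k)^j * ((l.choose j : ℕ) : k)) •
             ((((-1:k)^i * ((i.factorial : k))⁻¹) * ((-1:k)^l * ((l.factorial : k))⁻¹)) •
              ((E ^ (i+l)) (act i a (act l b u))))))
        = (if l = 0 then
            (∑ i ∈ range M, ((((-1:k)^i * ((i.factorial : k))⁻¹) * ((-1:k)^l * ((l.factorial : k))⁻¹)) •
              ((E ^ (i+l)) (act i a (act l b u))))) else 0) := by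
      intro l hl
      rw [Finset.sum_comm]
      have : ∀ i ∈ range M,
          (∑ j ∈ range N2, (((-1:k)^j * ((l.choose j : ℕ) : k)) •
             ((((-1:k)^i * ((i.factorial : k))⁻¹) * ((-1:k)^l * ((l.factorial : k))⁻¹)) •
              ((E ^ (i+l)) (act i a (act l b u))))))
          = (∑ j ∈ range N2, ((-1:k)^j * ((l.choose j : ℕ) : k))) •
             ((((-1:k)^i * ((i.factorial : k))⁻¹) * ((-1:k)^l * ((l.factorial : k))⁻¹)) •
              ((E ^ (i+l)) (act i a (act l b u)))) := by
        intro i _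
        rw [Finset.sum_smul]
      rw [Finset.sum_congr rfl this]
      have hcs : (∑ j ∈ range N2, ((-1:k)^j * ((l.choose j : ℕ) : k)))
          = if l = 0 then 1 else 0 := by
        have hshrink : (∑ j ∈ range N2, ((-1:k)^j * ((l.choose j : ℕ) : k)))
            = ∑ j ∈ range (l+1), ((-1:k)^j * ((l.choose j : ℕ) : k)) := by
          symm
          refine Finset.sum_subset (Finset.range_subset_range.mpr (mem_range.mp hl)) ?_
          intro j _ hjl
          rw [Nat.choose_eq_zero_of_lt (by simpa using hjl)]
          simp
        rw [hshrink]
        have := Int.alternating_sum_range_choose (n := l)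
        have hcast := congrArg (fun z : ℤ => (z : k)) this
        push_cast at hcast
        rw [hcast]
      rw [hcs]
      split <;> simp
    rw [Finset.sum_congr rfl hj_collapse]
    rw [Finset.sum_ite_eq' (range N2) 0]
    simp only [mem_range.mpr hN2pos, if_true]
    refine Finset.sum_congr rfl fun i _ => ?_
    rw [← hE]
    norm_num

end ConformalAux

/-- If every element of an associative conformal algebra is nilpotent with respect
to the `0`-product, then no nonzero element `u` of a conformal module can satisfy
`{b ᵧ u} = u`. -/
theorem nilpotent_gamma_fixed_point
    {k : Type*} [Field k] [CharZero k]
    {C V : Type*} [AddCommGroup C] [Module k C] [AddCommGroup V] [Module k V]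
    (Dop : C →ₗ[k] C) (mul : ℕ → C →ₗ[k] C →ₗ[k] C)
    (Dv : V →ₗ[k] V) (act : ℕ → C →ₗ[k] V →ₗ[k] V)
    (hloc : ∀ x y : C, ∃ N : ℕ, ∀ n ≥ N, mul n x y = 0)
    (hC2 : ∀ (n : ℕ) (x y : C),
      mul n x (Dop y) = Dop (mul n x y) + (n : k) • mul (n - 1) x y)
    (hC3 : ∀ (n : ℕ) (x y : C),
      mul n (Dop x) y = -((n : k)) • mul (n - 1) x y)
    (hassocL : ∀ (n m : ℕ) (u v w : C),
      mul m (mul n u v) w =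
        ∑ s ∈ range (n + 1),
          ((-1 : k) ^ s * (n.choose s : k)) • mul (n - s) u (mul (m + s) v w))
    (hlocV : ∀ (a : C) (u : V), ∃ N : ℕ, ∀ n ≥ N, act n a u = 0)
    (hC2V : ∀ (n : ℕ) (a : C) (u : V),
      act n a (Dv u) = Dv (act n a u) + (n : k) • act (n - 1) a u)
    (hC3V : ∀ (n : ℕ) (a : C) (u : V),
      act n (Dop a) u = -((n : k)) • act (n - 1) a u)
    (hassocV : ∀ (n m : ℕ) (a b : C) (u : V),
      act m (mul n a b) u =
        ∑ s ∈ range (n + 1),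
          ((-1 : k) ^ s * (n.choose s : k)) • act (n - s) a (act (m + s) b u))
    (hnil : ∀ b : C, ∃ m : ℕ, lnpow (fun x y => mul 0 x y) b m = 0) :
    ∀ (γ : k) (b : C) (u : V),
      (∑ᶠ n : ℕ, (γ ^ n * ((n.factorial : k))⁻¹) • curlyAct Dv act n b u) = u →
      u = 0 := by
  intro γ b u hu
  classical
  have hgact : ∀ v : V, gact Dv act γ b v
      = ∑ᶠ n : ℕ, (γ ^ n * ((n.factorial : k))⁻¹) • curlyAct Dv act n b v := fun v => rfl
  -- the fixed point equation in terms of gact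
  have hu' : gact Dv act γ b u = u := hu
  set T0 : V → V := fun v => act 0 b v with hT0
  have hiter : ∀ j : ℕ, u = gact Dv act γ b (T0^[j] u) := by
    intro j
    induction j with
    | zero => simpa using hu'.symm
    | succ j IH =>
      calc u = gact Dv act γ b u := hu'.symm
        _ = gact Dv act γ b (gact Dv act γ b (T0^[j] u)) := by rw [← IH]
        _ = gact Dv act γ b (act 0 b (T0^[j] u)) :=
            gact_key Dv act hlocV hC2V γ b b (T0^[j] u)
        _ = gact Dv act γ b (T0^[j+1] u) := by
            rw [Function.iterate_succ_apply' T0 j u]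
  have hpow : ∀ (j : ℕ) (v : V), T0^[j+1] v = act 0 (lnpow (fun x y => mul 0 x y) b j) v := by
    intro j
    induction j with
    | zero => intro v; simp [hT0, lnpow]
    | succ j IH =>
      intro v
      rw [Function.iterate_succ_apply T0 (j+1) v]
      rw [IH (T0 v)]
      show act 0 (lnpow (fun x y => mul 0 x y) b j) (act 0 b v)
        = act 0 (lnpow (fun x y => mul 0 x y) b (j+1)) v
      have : lnpow (fun x y => mul 0 x y) b (j+1)
          = mul 0 (lnpow (fun x y => mul 0 x y) b j) b := rfl
      rw [this, hassocV 0 0 (lnpow (fun x y => mul 0 x y) b j) b v]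
      simp
  obtain ⟨m, hm⟩ := hnil b
  have hfin : u = gact Dv act γ b (T0^[m+1] u) := hiter (m+1)
  rw [hpow m u, hm] at hfin
  have hz : act 0 (0 : C) u = 0 := by
    rw [map_zero]
    rfl
  rw [hz] at hfin
  have hgz : gact Dv act γ b (0 : V) = 0 := by
    have hc : ∀ n : ℕ, curlyAct Dv act n b (0 : V) = 0 := by
      intro n
      have : ∀ s : ℕ, ((-1 : k) ^ (n + s) * ((s.factorial : k))⁻¹) •
          ((Dv ^ s) (act (n + s) b (0:V))) = 0 := by
        intro s; rw [map_zero, map_zero, smul_zero]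
      unfold curlyAct
      rw [finsum_congr this, finsum_zero]
    unfold gact
    have : ∀ n : ℕ, (γ ^ n * ((n.factorial : k))⁻¹) • curlyAct Dv act n b (0:V) = 0 := by
      intro n; rw [hc n, smul_zero]
    rw [finsum_congr this, finsum_zero]
  rw [hgz] at hfin
  exact hfin
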